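/- Let {S_n, n ∈ ℕ^k} be a multiindexed demisubmartingale with S_ℓ = 0 when ∏ ℓ_i = 0, and fix a direction s and a < b. Let U_{n_s}(a,b) be the number of complete upcrossings of [a,b] by the sequence j ↦ S_{n;s;j}, 1 ≤ j ≤ n_s. Then E[U_{n_s}(a,b)] ≤ (E[(S_n - a)⁺] - E[(S_{n;s;1} - a)⁺]) / (b - a). -/

import Mathlib

/-!
Put `g_k = (f_k - a)⁺` and let `C_k ∈ {0, 1}` indicate that an upcrossing of `[a, b]` is in
progress at time `k`. Doob's pathwise argument gives `(b - a) U_N ≤ ∑_{k<N} C_k (g_{k+1} - g_k)`,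
and `∑_k (g_{k+1} - g_k)` telescopes to `g_N - g_0`, so it suffices that
`E[(1 - C_k)(g_{k+1} - g_k)] ≥ 0`. For a submartingale this follows from adaptedness of `C_k`;
for a demisubmartingale the point is that `(1 - C_k) 1{f_k > a}` is a nonnegative nondecreasing
function of `f_0, …, f_k` (raising a path can only end an upcrossing), while
`(1 - C_k)(g_{k+1} - g_k) ≥ (1 - C_k) 1{f_k > a} (f_{k+1} - f_k)`.

The upcrossings completed by time `M` do not depend on `f_{M+1}`, so applying the estimate to the
sequence stopped at `M` (again a demisubmartingale) bounds them by `g_M` instead of `g_{M+1}`.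
For the theorem, `j ↦ S_{n;s;j+1}` is such a sequence and `M = n_s - 1`.
-/
open MeasureTheory ENNReal

/-- Multiindexed demisubmartingale. -/
def IsMultiDemisubmartingale {k : ℕ} {Ω : Type*} [MeasurableSpace Ω] (μ : Measure Ω)
    (S : (Fin k → ℕ) → Ω → ℝ) : Prop :=
  (∀ n, Integrable (S n) μ) ∧
  ∀ i j : Fin k → ℕ, i ≤ j →
    ∀ f : ({m : Fin k → ℕ // m ≤ i} → ℝ) → ℝ, Monotone f → (∀ x, 0 ≤ f x) →
      Integrable (fun ω => (S j ω - S i ω) * f (fun m => S m.1 ω)) μ →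
      0 ≤ ∫ ω, (S j ω - S i ω) * f (fun m => S m.1 ω) ∂μ

section

open Set

variable {Ω : Type*} {a b : ℝ}

section CrossingTimeCongr

variable {β : Type*} {u v : ℕ → Ω → β} {s : Set β} {c N : ℕ} {ω : Ω}

theorem hittingBtwn_le_of_forall_lt_eq (h : ∀ j < N, u j ω = v j ω) :
    hittingBtwn u s c N ω ≤ hittingBtwn v s c N ω := by
  rcases (hittingBtwn_le (u := v) (s := s) (n := c) ω).lt_or_eq with hlt | heq
  · obtain ⟨j, hj, hjs⟩ := (hittingBtwn_lt_iff _ hlt).1 (Nat.lt_succ_self _)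
    have : hittingBtwn u s c N ω < hittingBtwn v s c N ω + 1 :=
      (hittingBtwn_lt_iff _ hlt).2 ⟨j, hj, h j (by have := hj.2; omega) ▸ hjs⟩
    omega
  · exact (hittingBtwn_le ω).trans heq.ge

theorem hittingBtwn_congr_of_lt (h : ∀ j < N, u j ω = v j ω) :
    hittingBtwn u s c N ω = hittingBtwn v s c N ω :=
  le_antisymm (hittingBtwn_le_of_forall_lt_eq h)
    (hittingBtwn_le_of_forall_lt_eq fun j hj => (h j hj).symm)

theorem crossingTime_congr_of_lt {u v : ℕ → Ω → ℝ} (h : ∀ j < N, u j ω = v j ω) (m : ℕ) :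
    upperCrossingTime a b u N m ω = upperCrossingTime a b v N m ω ∧
      lowerCrossingTime a b u N m ω = lowerCrossingTime a b v N m ω := by
  induction m with
  | zero => exact ⟨rfl, hittingBtwn_congr_of_lt h⟩
  | succ m ih =>
    have hupper : upperCrossingTime a b u N (m + 1) ω = upperCrossingTime a b v N (m + 1) ω := by
      rw [upperCrossingTime_succ_eq, upperCrossingTime_succ_eq, ih.2]
      exact hittingBtwn_congr_of_lt h
    refine ⟨hupper, ?_⟩
    rw [lowerCrossingTime, lowerCrossingTime, hupper]
    exact hittingBtwn_congr_of_lt h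

theorem upcrossingsBefore_congr_of_lt {u v : ℕ → Ω → ℝ} (h : ∀ j < N, u j ω = v j ω) :
    upcrossingsBefore a b u N ω = upcrossingsBefore a b v N ω := by
  simp only [upcrossingsBefore, fun m => (crossingTime_congr_of_lt (a := a) (b := b) h m).1]

end CrossingTimeCongr

/-- An upcrossing of `[a, b]` is in progress at time `k`: the path has been `≤ a` at some time
`≤ k` and has stayed `< b` since. -/
def InUpcrossing (a b : ℝ) (u : ℕ → ℝ) : ℕ → Prop
  | 0 => u 0 ≤ a
  | k + 1 => u (k + 1) ≤ a ∨ (InUpcrossing a b u k ∧ u (k + 1) < b)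

namespace InUpcrossing

theorem congr {u v : ℕ → ℝ} {k : ℕ} (h : ∀ j ≤ k, u j = v j) :
    InUpcrossing a b u k ↔ InUpcrossing a b v k := by
  induction k with
  | zero => simp only [InUpcrossing, h 0 le_rfl]
  | succ k ih =>
    simp only [InUpcrossing, h (k + 1) le_rfl, ih fun j hj => h j (hj.trans k.le_succ)]

theorem of_le {u v : ℕ → ℝ} (huv : u ≤ v) {k : ℕ} (hv : InUpcrossing a b v k) :
    InUpcrossing a b u k := by
  induction k with
  | zero => exact (huv 0).trans hv
  | succ k ih =>
    rcases hv with hv | ⟨hv, hvb⟩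
    · exact Or.inl ((huv _).trans hv)
    · exact Or.inr ⟨ih hv, (huv _).trans_lt hvb⟩

end InUpcrossing

theorem measurableSet_inUpcrossing (k : ℕ) : MeasurableSet {u : ℕ → ℝ | InUpcrossing a b u k} := by
  induction k with
  | zero => exact measurableSet_le (measurable_pi_apply 0) measurable_const
  | succ k ih =>
    exact (measurableSet_le (measurable_pi_apply _) measurable_const).union
      (ih.inter (measurableSet_lt (measurable_pi_apply _) measurable_const))

section UpcrossingStrat

variable {f : ℕ → Ω → ℝ} {N k m : ℕ} {ω : Ω}

theorem upcrossingStrat_eq_one_of_mem (hm : m < N)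
    (hk : k ∈ Ico (lowerCrossingTime a b f N m ω) (upperCrossingTime a b f N (m + 1) ω)) :
    upcrossingStrat a b f N k ω = 1 := by
  refine le_antisymm upcrossingStrat_le_one ?_
  calc (1 : ℝ)
      = (Ico (lowerCrossingTime a b f N m ω) (upperCrossingTime a b f N (m + 1) ω)).indicator 1 k :=
        by rw [indicator_of_mem hk, Pi.one_apply]
    _ ≤ upcrossingStrat a b f N k ω :=
        Finset.single_le_sum (f := fun m => (Ico (lowerCrossingTime a b f N m ω)
          (upperCrossingTime a b f N (m + 1) ω)).indicator 1 k)
          (fun _ _ => indicator_nonneg (fun _ _ => zero_le_one) _) (Finset.mem_range.2 hm)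

theorem upcrossingStrat_eq_zero_of_forall_notMem
    (h : ∀ m < N, k ∉ Ico (lowerCrossingTime a b f N m ω) (upperCrossingTime a b f N (m + 1) ω)) :
    upcrossingStrat a b f N k ω = 0 :=
  Finset.sum_eq_zero fun m hm => indicator_of_notMem (h m (Finset.mem_range.1 hm)) _

theorem lowerCrossingTime_ne_of_lt (hk : k < N) (hfk : a < f k ω) :
    lowerCrossingTime a b f N m ω ≠ k := fun h => by
  have hle := stoppedValue_lowerCrossingTime (h.trans_ne hk.ne)
  simp only [stoppedValue, h] at hle
  exact hfk.not_ge hle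

theorem upperCrossingTime_succ_ne_of_lt (hk : k < N) (hfk : f k ω < b) :
    upperCrossingTime a b f N (m + 1) ω ≠ k := fun h => by
  have hge := stoppedValue_upperCrossingTime (h.trans_ne hk.ne)
  simp only [stoppedValue, h] at hge
  exact hfk.not_ge hge

theorem exists_mem_crossingInterval_of_le (hab : a < b) (hk : k < N) (hfk : f k ω ≤ a) :
    ∃ m < N, k ∈ Ico (lowerCrossingTime a b f N m ω) (upperCrossingTime a b f N (m + 1) ω) := by
  classical
  have hex : ∃ m, k < upperCrossingTime a b f N m ω :=
    ⟨N, by rwa [upperCrossingTime_bound_eq f N ω hab]⟩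
  obtain ⟨m, hm⟩ : ∃ m, Nat.find hex = m + 1 := Nat.exists_eq_succ_of_ne_zero fun h0 => by
    simpa [h0] using Nat.find_spec hex
  have hUm : upperCrossingTime a b f N m ω ≤ k := not_lt.1 (Nat.find_min hex (by omega))
  refine ⟨m, ?_, hittingBtwn_le_of_mem hUm hk.le hfk, hm ▸ Nat.find_spec hex⟩
  by_contra! hNm
  rw [upperCrossingTime_eq_of_bound_le hab hNm] at hUm
  omega

theorem exists_mem_crossingInterval_iff_inUpcrossing (hab : a < b) (hk : k < N) :
    (∃ m < N, k ∈ Ico (lowerCrossingTime a b f N m ω) (upperCrossingTime a b f N (m + 1) ω)) ↔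
      InUpcrossing a b (fun j => f j ω) k := by
  induction k with
  | zero =>
    refine ⟨fun ⟨m, _, hL, _⟩ => ?_, exists_mem_crossingInterval_of_le hab hk⟩
    show f 0 ω ≤ a
    by_contra! h
    exact lowerCrossingTime_ne_of_lt (b := b) (m := m) hk h (by omega)
  | succ k ih =>
    specialize ih (by omega)
    constructor
    · rintro ⟨m, hm, hL, hU⟩
      by_cases! hfa : f (k + 1) ω ≤ a
      · exact Or.inl hfa
      have hL' : lowerCrossingTime a b f N m ω ≤ k := by
        have : lowerCrossingTime a b f N m ω ≠ k + 1 := lowerCrossingTime_ne_of_lt hk hfa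
        omega
      refine Or.inr ⟨ih.1 ⟨m, hm, hL', by omega⟩, ?_⟩
      by_contra! hfb
      have : upperCrossingTime a b f N (m + 1) ω ≤ k + 1 := by
        rw [upperCrossingTime_succ_eq]
        exact hittingBtwn_le_of_mem (hL'.trans k.le_succ) hk.le hfb
      omega
    · rintro (hfa | ⟨hin, hfb⟩)
      · exact exists_mem_crossingInterval_of_le hab hk hfa
      · obtain ⟨m, hm, hL, hU⟩ := ih.2 hin
        exact ⟨m, hm, by omega, lt_of_le_of_ne hU (upperCrossingTime_succ_ne_of_lt hk hfb).symm⟩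

theorem upcrossingStrat_eq_indicator_inUpcrossing (hab : a < b) (hk : k < N) :
    upcrossingStrat a b f N k ω = {u | InUpcrossing a b u k}.indicator 1 (fun j => f j ω) := by
  by_cases h : InUpcrossing a b (fun j => f j ω) k
  · obtain ⟨m, hm, hmem⟩ := (exists_mem_crossingInterval_iff_inUpcrossing hab hk).2 h
    rw [indicator_of_mem (by exact h), upcrossingStrat_eq_one_of_mem hm hmem, Pi.one_apply]
  · rw [indicator_of_notMem (by exact h), upcrossingStrat_eq_zero_of_forall_notMem]
    exact fun m hm hmem => h ((exists_mem_crossingInterval_iff_inUpcrossing hab hk).1 ⟨m, hm, hmem⟩)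

theorem mul_upcrossingsBefore_le_sum_upcrossingStrat_mul_posPart (hab : a < b) :
    (b - a) * upcrossingsBefore a b f N ω ≤ ∑ k ∈ Finset.range N,
      upcrossingStrat a b f N k ω * ((f (k + 1) ω - a)⁺ - (f k ω - a)⁺) := by
  have h := mul_upcrossingsBefore_le (f := fun n ω => (f n ω - a)⁺) (a := 0) (b := b - a)
    (N := N) (ω := ω) (posPart_nonneg _) (sub_pos.2 hab)
  simpa [upcrossingsBefore_pos_eq hab, upcrossingStrat, crossing_pos_eq hab] using h

theorem sub_mul_indicator_le_one_sub_upcrossingStrat_mul (hab : a < b) (hk : k < N) (ω : Ω) :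
    (f (k + 1) ω - f k ω) * {u : ℕ → ℝ | ¬InUpcrossing a b u k ∧ a < u k}.indicator 1
      (fun j => f (min j k) ω) ≤
    (1 - upcrossingStrat a b f N k ω) * ((f (k + 1) ω - a)⁺ - (f k ω - a)⁺) := by
  have hpast : InUpcrossing a b (fun j => f (min j k) ω) k ↔ InUpcrossing a b (fun j => f j ω) k :=
    InUpcrossing.congr fun j hj => by rw [min_eq_left hj]
  set T : Set (ℕ → ℝ) := {u | ¬InUpcrossing a b u k ∧ a < u k}
  rw [upcrossingStrat_eq_indicator_inUpcrossing hab hk]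
  by_cases hin : InUpcrossing a b (fun j => f j ω) k
  · rw [indicator_of_mem (s := {u | InUpcrossing a b u k}) hin,
      indicator_of_notMem (s := T) fun h => h.1 (hpast.2 hin)]
    simp
  rw [indicator_of_notMem (s := {u | InUpcrossing a b u k}) hin, sub_zero, one_mul]
  by_cases hfa : a < f k ω
  · rw [indicator_of_mem (s := T) ⟨mt hpast.1 hin, by rwa [min_self]⟩, Pi.one_apply, mul_one,
      posPart_eq_self.2 (sub_nonneg.2 hfa.le)]
    linarith [le_posPart (f (k + 1) ω - a)]
  · rw [indicator_of_notMem (s := T) fun h => hfa (by simpa using h.2), mul_zero,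
      posPart_eq_zero.2 (sub_nonpos.2 (not_lt.1 hfa)), sub_zero]
    exact posPart_nonneg _

end UpcrossingStrat

theorem lintegral_natCast_le_ofReal_integral [MeasurableSpace Ω] {μ : Measure Ω} {U : Ω → ℕ}
    {h : Ω → ℝ} (hh : Integrable h μ) (hUh : ∀ ω, (U ω : ℝ) ≤ h ω) :
    ∫⁻ ω, (U ω : ℝ≥0∞) ∂μ ≤ ENNReal.ofReal (∫ ω, h ω ∂μ) := by
  rw [ofReal_integral_eq_lintegral_ofReal hh
    (ae_of_all _ fun ω => (Nat.cast_nonneg _).trans (hUh ω))]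
  exact lintegral_mono fun ω => by simpa using ENNReal.ofReal_le_ofReal (hUh ω)

section Demisubmartingale

variable [MeasurableSpace Ω] {μ : Measure Ω} {f : ℕ → Ω → ℝ} {N k : ℕ}

/-- The past `f_0, …, f_k` enters through the path stopped at `k`. Only consecutive increments
are required; the case of general `i ≤ j` follows by telescoping. -/
def IsDemisubmartingale (μ : Measure Ω) (f : ℕ → Ω → ℝ) : Prop :=
  (∀ n, Integrable (f n) μ) ∧
  ∀ k (F : (ℕ → ℝ) → ℝ), Monotone F → (∀ x, 0 ≤ F x) →
    Integrable (fun ω => (f (k + 1) ω - f k ω) * F (fun j => f (min j k) ω)) μ →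
    0 ≤ ∫ ω, (f (k + 1) ω - f k ω) * F (fun j => f (min j k) ω) ∂μ

theorem IsDemisubmartingale.stopped (hf : IsDemisubmartingale μ f) (M : ℕ) :
    IsDemisubmartingale μ (fun j => f (min j M)) := by
  refine ⟨fun j => hf.1 _, fun k F hF hF0 hint => ?_⟩
  rcases lt_or_ge k M with hk | hk
  · have hpath : ∀ j, min (min j k) M = min j k := fun j => by omega
    simp only [hpath, show min (k + 1) M = k + 1 by omega, show min k M = k by omega] at hint ⊢
    exact hf.2 k F hF hF0 hint
  · simp [show min (k + 1) M = M by omega, show min k M = M by omega]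

theorem aestronglyMeasurable_upcrossingStrat (hf : ∀ j, AEMeasurable (f j) μ)
    (hab : a < b) (hk : k < N) : AEStronglyMeasurable (upcrossingStrat a b f N k) μ := by
  have hmeas : Measurable ({u | InUpcrossing a b u k}.indicator (1 : (ℕ → ℝ) → ℝ)) :=
    measurable_one.indicator (measurableSet_inUpcrossing k)
  refine (hmeas.comp_aemeasurable (aemeasurable_pi_lambda _ hf)).aestronglyMeasurable.congr ?_
  exact ae_of_all _ fun ω => (upcrossingStrat_eq_indicator_inUpcrossing hab hk).symm

theorem integrable_one_sub_upcrossingStrat_mul [IsFiniteMeasure μ]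
    (hf : ∀ j, Integrable (f j) μ) (hab : a < b) (hk : k < N) :
    Integrable (fun ω => (1 - upcrossingStrat a b f N k ω) *
      ((f (k + 1) ω - a)⁺ - (f k ω - a)⁺)) μ := by
  have hg : ∀ j, Integrable (fun ω => (f j ω - a)⁺) μ := fun j =>
    ((hf j).sub (integrable_const a)).pos_part
  refine ((hg (k + 1)).sub (hg k)).bdd_mul (c := 1)
    (aestronglyMeasurable_const.sub
      (aestronglyMeasurable_upcrossingStrat (fun j => (hf j).aemeasurable) hab hk))
    (ae_of_all _ fun ω => ?_)
  rw [Real.norm_of_nonneg (sub_nonneg.2 upcrossingStrat_le_one)]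
  linarith [upcrossingStrat_nonneg (a := a) (b := b) (f := f) (N := N) (n := k) (ω := ω)]

theorem IsDemisubmartingale.integral_one_sub_upcrossingStrat_mul_nonneg [IsFiniteMeasure μ]
    (hf : IsDemisubmartingale μ f) (hab : a < b) (hk : k < N) :
    0 ≤ ∫ ω, (1 - upcrossingStrat a b f N k ω) * ((f (k + 1) ω - a)⁺ - (f k ω - a)⁺) ∂μ := by
  set T : Set (ℕ → ℝ) := {u | ¬InUpcrossing a b u k ∧ a < u k}
  have hT : MeasurableSet T := (measurableSet_inUpcrossing k).compl.inter
    (measurableSet_lt measurable_const (measurable_pi_apply k))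
  have hF_mono : Monotone (T.indicator (1 : (ℕ → ℝ) → ℝ)) := by
    intro x y hxy
    by_cases hx : x ∈ T
    · rw [indicator_of_mem hx, indicator_of_mem
        (show y ∈ T from ⟨fun hy => hx.1 (hy.of_le hxy), hx.2.trans_le (hxy k)⟩)]
      rfl
    · rw [indicator_of_notMem hx]
      exact indicator_nonneg (fun _ _ => zero_le_one) y
  have hF_int :
      Integrable (fun ω => (f (k + 1) ω - f k ω) * T.indicator 1 (fun j => f (min j k) ω)) μ := by
    refine ((hf.1 (k + 1)).sub (hf.1 k)).mul_bdd (c := 1) ?_ (ae_of_all _ fun ω => ?_)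
    · exact ((measurable_one.indicator hT).comp_aemeasurable
        (aemeasurable_pi_lambda _ fun j => (hf.1 (min j k)).aemeasurable)).aestronglyMeasurable
    · exact (norm_indicator_le_norm_self _ _).trans (by simp)
  calc 0 ≤ ∫ ω, (f (k + 1) ω - f k ω) * T.indicator 1 (fun j => f (min j k) ω) ∂μ :=
        hf.2 k _ hF_mono (fun _ => indicator_nonneg (fun _ _ => zero_le_one) _) hF_int
    _ ≤ _ := integral_mono hF_int (integrable_one_sub_upcrossingStrat_mul hf.1 hab hk)
        (sub_mul_indicator_le_one_sub_upcrossingStrat_mul hab hk)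

theorem IsDemisubmartingale.lintegral_upcrossingsBefore_le [IsFiniteMeasure μ]
    (hf : IsDemisubmartingale μ f) (hab : a < b) (N : ℕ) :
    ∫⁻ ω, (upcrossingsBefore a b f N ω : ℝ≥0∞) ∂μ ≤
      ENNReal.ofReal (((∫ ω, (f N ω - a)⁺ ∂μ) - ∫ ω, (f 0 ω - a)⁺ ∂μ) / (b - a)) := by
  set g : ℕ → Ω → ℝ := fun j ω => (f j ω - a)⁺
  set C : ℕ → Ω → ℝ := upcrossingStrat a b f N
  have hg : ∀ j, Integrable (g j) μ := fun j => ((hf.1 j).sub (integrable_const a)).pos_part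
  have hrest : ∀ k ∈ Finset.range N,
      Integrable (fun ω => (1 - C k ω) * (g (k + 1) ω - g k ω)) μ := fun k hk =>
    integrable_one_sub_upcrossingStrat_mul hf.1 hab (Finset.mem_range.1 hk)
  have htel : (fun ω => ∑ k ∈ Finset.range N, C k ω * (g (k + 1) ω - g k ω)) =
      fun ω => (g N ω - g 0 ω) - ∑ k ∈ Finset.range N, (1 - C k ω) * (g (k + 1) ω - g k ω) := by
    funext ω
    rw [← Finset.sum_range_sub (fun j => g j ω), ← Finset.sum_sub_distrib]
    exact Finset.sum_congr rfl fun k _ => by ring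
  have hdiff : Integrable (fun ω => g N ω - g 0 ω) μ := (hg N).sub (hg 0)
  have hint : Integrable (fun ω => ∑ k ∈ Finset.range N, C k ω * (g (k + 1) ω - g k ω)) μ := by
    rw [htel]
    exact hdiff.sub (integrable_finsetSum _ hrest)
  have hle : ∫ ω, ∑ k ∈ Finset.range N, C k ω * (g (k + 1) ω - g k ω) ∂μ ≤
      (∫ ω, g N ω ∂μ) - ∫ ω, g 0 ω ∂μ := by
    rw [htel, integral_sub hdiff (integrable_finsetSum _ hrest),
      integral_sub (hg N) (hg 0), integral_finsetSum _ hrest, sub_le_self_iff]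
    exact Finset.sum_nonneg fun k hk =>
      hf.integral_one_sub_upcrossingStrat_mul_nonneg hab (Finset.mem_range.1 hk)
  calc ∫⁻ ω, (upcrossingsBefore a b f N ω : ℝ≥0∞) ∂μ
      ≤ ENNReal.ofReal
          (∫ ω, (∑ k ∈ Finset.range N, C k ω * (g (k + 1) ω - g k ω)) / (b - a) ∂μ) := by
        refine lintegral_natCast_le_ofReal_integral (hint.div_const _) fun ω => ?_
        rw [le_div_iff₀ (sub_pos.2 hab), mul_comm]
        exact mul_upcrossingsBefore_le_sum_upcrossingStrat_mul_posPart hab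
    _ ≤ _ := by
        rw [integral_div]
        gcongr

theorem IsDemisubmartingale.lintegral_upcrossingsBefore_succ_le [IsFiniteMeasure μ]
    (hf : IsDemisubmartingale μ f) (hab : a < b) (M : ℕ) :
    ∫⁻ ω, (upcrossingsBefore a b f (M + 1) ω : ℝ≥0∞) ∂μ ≤
      ENNReal.ofReal (((∫ ω, (f M ω - a)⁺ ∂μ) - ∫ ω, (f 0 ω - a)⁺ ∂μ) / (b - a)) := by
  have hstop : ∀ ω, upcrossingsBefore a b f (M + 1) ω =
      upcrossingsBefore a b (fun j => f (min j M)) (M + 1) ω := fun ω =>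
    upcrossingsBefore_congr_of_lt fun j hj => by rw [min_eq_left (by omega)]
  simpa [hstop] using (hf.stopped M).lintegral_upcrossingsBefore_le hab (M + 1)

end Demisubmartingale

theorem IsMultiDemisubmartingale.isDemisubmartingale_update {k : ℕ} [MeasurableSpace Ω]
    {μ : Measure Ω} {S : (Fin k → ℕ) → Ω → ℝ} (hS : IsMultiDemisubmartingale μ S)
    (n : Fin k → ℕ) (s : Fin k) :
    IsDemisubmartingale μ (fun j => S (Function.update n s (j + 1))) := by
  refine ⟨fun j => hS.1 _, fun q F hF hF0 hint => ?_⟩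
  have hpast : ∀ j, Function.update n s (min j q + 1) ≤ Function.update n s (q + 1) := fun j =>
    update_le_update_iff'.2 (by omega)
  exact hS.2 _ _ (update_le_update_iff'.2 (by omega))
    (fun x => F fun j => x ⟨_, hpast j⟩) (fun x y hxy => hF fun j => hxy _) (fun x => hF0 _) hint

end

theorem stmt_16_general {k : ℕ} {Ω : Type*} [MeasurableSpace Ω] (μ : Measure Ω)
    [IsProbabilityMeasure μ]
    (S : (Fin k → ℕ) → Ω → ℝ) (hS : IsMultiDemisubmartingale μ S)
    (a b : ℝ) (hab : a < b) (s : Fin k) (n : Fin k → ℕ)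
    (U : Ω → ℕ)
    (hU : ∀ ω, U ω = upcrossingsBefore a b
      (fun j ω' => S (Function.update n s (j + 1)) ω') (n s) ω) :
    ∫⁻ ω, (U ω : ℝ≥0∞) ∂μ ≤
      ENNReal.ofReal
        (((∫ ω, max (S n ω - a) 0 ∂μ) -
            ∫ ω, max (S (Function.update n s 1) ω - a) 0 ∂μ) / (b - a)) := by
  obtain hn | ⟨M, hM⟩ : n s = 0 ∨ ∃ M, n s = M + 1 := by
    rcases n s with _ | M
    exacts [Or.inl rfl, Or.inr ⟨M, rfl⟩]
  · simp [hU, hn]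
  · have hupdate : Function.update n s (M + 1) = n := hM ▸ Function.update_eq_self s n
    simp only [hU, hM]
    simpa [hupdate, posPart_def] using
      (hS.isDemisubmartingale_update n s).lintegral_upcrossingsBefore_succ_le hab M

/-- Directional upcrossing inequality: `U_{n_s}(a,b)` is the number of complete
upcrossings of `[a,b]` by `j ↦ S_{n;s;j}`, `1 ≤ j ≤ n_s` (expressed via Mathlib's
`upcrossingsBefore` applied to the shifted sequence `j ↦ S_{n;s;j+1}`); then
`E[U_{n_s}(a,b)] ≤ (E[(S_n - a)⁺] - E[(S_{n;s;1} - a)⁺]) / (b - a)`. -/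
theorem stmt_16 {k : ℕ} {Ω : Type*} [MeasurableSpace Ω] (μ : Measure Ω)
    [IsProbabilityMeasure μ]
    (S : (Fin k → ℕ) → Ω → ℝ) (hS : IsMultiDemisubmartingale μ S)
    (hbd : ∀ ℓ : Fin k → ℕ, (∃ s, ℓ s = 0) → ∀ ω, S ℓ ω = 0)
    (a b : ℝ) (hab : a < b) (s : Fin k) (n : Fin k → ℕ)
    (U : Ω → ℕ)
    (hU : ∀ ω, U ω = upcrossingsBefore a b
      (fun j ω' => S (Function.update n s (j + 1)) ω') (n s) ω) :
    ∫⁻ ω, (U ω : ℝ≥0∞) ∂μ ≤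
      ENNReal.ofReal
        (((∫ ω, max (S n ω - a) 0 ∂μ) -
            ∫ ω, max (S (Function.update n s 1) ω - a) 0 ∂μ) / (b - a)) :=
  stmt_16_general μ S hS a b hab s n U hU
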